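/- arXiv:1206.3781 — 2 statements merged into one kernel-verified Lean document; each statement's English description precedes it below -/
import Mathlib

section
/- Let d : A → B and d' : B → C be linear maps between finite-dimensional real vector spaces with pairings ⟨·,·⟩ : B* × B → ℝ etc., and suppose d' ∘ d = 0 and a 'Stokes identity' holds: ⟨β, d a⟩ = ε ⟨d* β, a⟩ + ⟨tr β, tr' a⟩ for all β ∈ B*, a ∈ A, where d* : B* → A*, tr, tr' are linear boundary trace maps and ε = ±1. Then the bilinear bracket {k¹,k²} = ⟨δ_p k¹, σ d (δ_q k²)⟩ + ⟨δ_q k¹, d(δ_p k²)⟩ − ⟨ε' tr(δ_q k¹), tr'(δ_p k²)⟩ defined on linear functionals k with prescribed boundary compatibility δ_b k = −ε' tr(δ_q k), with appropriate constant signs σ, ε', is skew-symmetric. -/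
/-- A functional `k` is recorded by its differentials `(δ_p k, δ_q k, δ_b k) ∈ A × B × Bb`.
By Stokes, the boundary part of `PB q₁ (d p₂)` cancels the `ε'`-term, and `σ = -ε` leaves
`Br k₁ k₂ = ε * (PA p₂ (dstar q₁) - PA p₁ (dstar q₂))`, which is visibly antisymmetric. -/
theorem stmt_4_general (A B Ap Bq Ab Bb : Type*)
    [AddCommGroup A] [Module ℝ A]
    [AddCommGroup B] [Module ℝ B]
    [AddCommGroup Ap] [Module ℝ Ap]
    [AddCommGroup Bq] [Module ℝ Bq]
    [AddCommGroup Ab] [Module ℝ Ab]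
    [AddCommGroup Bb] [Module ℝ Bb]
    (d : A →ₗ[ℝ] Bq)
    (dstar : B →ₗ[ℝ] Ap) (tr : B →ₗ[ℝ] Bb) (tr' : A →ₗ[ℝ] Ab)
    (PA : A →ₗ[ℝ] Ap →ₗ[ℝ] ℝ) (PB : B →ₗ[ℝ] Bq →ₗ[ℝ] ℝ)
    (Pb : Bb →ₗ[ℝ] Ab →ₗ[ℝ] ℝ)
    (ε σ ε' : ℝ)
    (hStokes : ∀ (β : B) (a : A),
      PB β (d a) = ε * PA a (dstar β) + Pb (tr β) (tr' a))
    (hσ : σ = -ε) (hε' : ε' = 1)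
    (Br : (A × B × Bb) → (A × B × Bb) → ℝ)
    (hBr : ∀ k₁ k₂ : A × B × Bb,
      Br k₁ k₂ = σ * PA k₁.1 (dstar k₂.2.1) + PB k₁.2.1 (d k₂.1)
        - ε' * Pb (tr k₁.2.1) (tr' k₂.1)) :
    ∀ k₁ k₂ : A × B × Bb,
      k₁.2.2 = -ε' • tr k₁.2.1 → k₂.2.2 = -ε' • tr k₂.2.1 →
        Br k₁ k₂ = - Br k₂ k₁ := by
  rintro ⟨p₁, q₁, b₁⟩ ⟨p₂, q₂, b₂⟩ - -
  rw [hBr, hBr, hStokes q₁ p₂, hStokes q₂ p₁, hσ, hε']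
  ring

/-- Abstract skew-symmetry of the Poisson bracket associated with the
Stokes-Dirac structure.  Here `A` models `Ω^{n-p}(M)`, `B` models
`Ω^{n-q}(M)`, `Ap` models `Ω^p(M)`, `Bq` models `Ω^q(M)`, `C` the next level
of the complex, and `Ab`, `Bb` model boundary forms.  `d : A → Bq` and
`dC : Bq → C` are the exterior derivatives with `dC ∘ d = 0`, `dstar : B → Ap`
is the "adjoint" derivative, `tr, tr'` the boundary traces and `PA, PB, Pb`
the integration pairings.  The Stokes identity
`⟨β, d a⟩ = ε ⟨d* β, a⟩ + ⟨tr β, tr' a⟩` holds.  A functional `k` is recorded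
by its differentials `(δ_p k, δ_q k, δ_b k) ∈ A × B × Bb`, subject to the
boundary compatibility `δ_b k = -ε' • tr (δ_q k)`.  With the appropriate
constant signs `σ = -ε` and `ε' = 1`, the bracket
`{k¹,k²} = ⟨δ_p k¹, σ d*(δ_q k²)⟩ + ⟨δ_q k¹, d (δ_p k²)⟩
          - ε' ⟨tr(δ_q k¹), tr'(δ_p k²)⟩`
is skew-symmetric. -/
theorem stmt_4 (A B Ap Bq C Ab Bb : Type*)
    [AddCommGroup A] [Module ℝ A] [FiniteDimensional ℝ A]
    [AddCommGroup B] [Module ℝ B] [FiniteDimensional ℝ B]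
    [AddCommGroup Ap] [Module ℝ Ap] [FiniteDimensional ℝ Ap]
    [AddCommGroup Bq] [Module ℝ Bq] [FiniteDimensional ℝ Bq]
    [AddCommGroup C] [Module ℝ C] [FiniteDimensional ℝ C]
    [AddCommGroup Ab] [Module ℝ Ab] [FiniteDimensional ℝ Ab]
    [AddCommGroup Bb] [Module ℝ Bb] [FiniteDimensional ℝ Bb]
    (d : A →ₗ[ℝ] Bq) (dC : Bq →ₗ[ℝ] C) (hcomplex : dC.comp d = 0)
    (dstar : B →ₗ[ℝ] Ap) (tr : B →ₗ[ℝ] Bb) (tr' : A →ₗ[ℝ] Ab)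
    (PA : A →ₗ[ℝ] Ap →ₗ[ℝ] ℝ) (PB : B →ₗ[ℝ] Bq →ₗ[ℝ] ℝ)
    (Pb : Bb →ₗ[ℝ] Ab →ₗ[ℝ] ℝ)
    (ε σ ε' : ℝ) (hε : ε = 1 ∨ ε = -1)
    (hStokes : ∀ (β : B) (a : A),
      PB β (d a) = ε * PA a (dstar β) + Pb (tr β) (tr' a))
    (hσ : σ = -ε) (hε' : ε' = 1)
    (Br : (A × B × Bb) → (A × B × Bb) → ℝ)
    (hBr : ∀ k₁ k₂ : A × B × Bb,
      Br k₁ k₂ = σ * PA k₁.1 (dstar k₂.2.1) + PB k₁.2.1 (d k₂.1)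
        - ε' * Pb (tr k₁.2.1) (tr' k₂.1)) :
    ∀ k₁ k₂ : A × B × Bb,
      k₁.2.2 = -ε' • tr k₁.2.1 → k₂.2.2 = -ε' • tr k₂.2.1 →
        Br k₁ k₂ = - Br k₂ k₁ :=
  stmt_4_general A B Ap Bq Ab Bb d dstar tr tr' PA PB Pb ε σ ε' hStokes hσ hε' Br hBr
end

section
/- With π_G(ρ,π,ρ_b) = (dρ,π,ρ_b), the canonical map ♯(e_ρ,e_π,e_b) = (e_π, −(−1)^{k(n−k)} e_ρ, −tr e_π), and the adjoint T*π_G(ē_ρ, ē_π, −(−1)^{n−k}tr ē_ρ) = ((−1)^{n−k} d ē_ρ, ē_π, −(−1)^{n−k} tr ē_ρ), the composite [♯] = Tπ_G ∘ ♯ ∘ T*π_G satisfies [♯](ē_ρ, ē_π, −(−1)^{n−k} tr ē_ρ) = (d ē_π, −(−1)^{n(k+1)} d ē_ρ, −tr ē_π). -/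
/-- Writing `n = k + m`, the two exponents differ by `k(k+1)`, which is even. -/
theorem neg_one_pow_mul_sub_mul_neg_one_pow_sub {R : Type*} [Monoid R] [HasDistribNeg R]
    {n k : ℕ} (hkn : k ≤ n) :
    (-1 : R) ^ (k * (n - k)) * (-1) ^ (n - k) = (-1) ^ (n * (k + 1)) := by
  obtain ⟨m, rfl⟩ := Nat.exists_eq_add_of_le hkn
  have hexp : (k + m) * (k + 1) = k * m + m + k * (k + 1) := by ring
  rw [Nat.add_sub_cancel_left, hexp, pow_add, pow_add,
    (Nat.even_mul_succ_self k).neg_one_pow, mul_one]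

/-- Theorem 2 of the paper (the reduced Poisson structure), abstractly.
`A` models `Ω^k(M)`, `B` models `Ω^{n-k}(M)`, `A'` models `Ω^{k+1}(M)`,
`B'` models `Ω^{n-k-1}(M)`, `Ab` models `Ω^k(∂M)`, `Eb` models
`Ω^{n-k-1}(∂M)`; `dA, dB` are exterior derivatives and `trA, trB` boundary
traces.  With the canonical map `♯(e_ρ,e_π,e_b) = (e_π, -(-1)^{k(n-k)} e_ρ,
-tr e_π)`, the quotient tangent map `Tπ_G(ρ̇,π̇,ρ̇_b) = (dρ̇,π̇,ρ̇_b)` and its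
adjoint `T*π_G(ē_ρ,ē_π,-(-1)^{n-k} tr ē_ρ) = ((-1)^{n-k} dē_ρ, ē_π,
-(-1)^{n-k} tr ē_ρ)`, the composite `[♯] = Tπ_G ∘ ♯ ∘ T*π_G` satisfies
`[♯](ē_ρ, ē_π, -(-1)^{n-k} tr ē_ρ) = (dē_π, -(-1)^{n(k+1)} dē_ρ, -tr ē_π)`. -/
theorem stmt_7 (n k : ℕ) (hkn : k ≤ n) (A B A' B' Ab Eb : Type*)
    [AddCommGroup A] [Module ℝ A] [AddCommGroup B] [Module ℝ B]
    [AddCommGroup A'] [Module ℝ A'] [AddCommGroup B'] [Module ℝ B']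
    [AddCommGroup Ab] [Module ℝ Ab] [AddCommGroup Eb] [Module ℝ Eb]
    (dA : A →ₗ[ℝ] A') (dB : B' →ₗ[ℝ] B)
    (trA : A →ₗ[ℝ] Ab) (trB : B' →ₗ[ℝ] Eb)
    (s s1 s2 : ℝ) (hs : s = (-1 : ℝ) ^ (n - k))
    (hs1 : s1 = (-1 : ℝ) ^ (k * (n - k))) (hs2 : s2 = (-1 : ℝ) ^ (n * (k + 1)))
    (sharp : B × A × Eb → A × B × Ab)
    (hsharp : ∀ e : B × A × Eb, sharp e = (e.2.1, -s1 • e.1, -trA e.2.1))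
    (Tpi : A × B × Ab → A' × B × Ab)
    (hTpi : ∀ v : A × B × Ab, Tpi v = (dA v.1, v.2.1, v.2.2))
    (Tstar : B' × A × Eb → B × A × Eb)
    (hTstar : ∀ ebar : B' × A × Eb, Tstar ebar = (s • dB ebar.1, ebar.2.1, ebar.2.2)) :
    ∀ (erho : B') (epi : A),
      Tpi (sharp (Tstar (erho, epi, -s • trB erho)))
        = (dA epi, -s2 • dB erho, -trA epi) := by
  intro erho epi
  have hsign : s1 * s = s2 := by
    rw [hs1, hs, hs2, neg_one_pow_mul_sub_mul_neg_one_pow_sub hkn]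
  rw [hTstar, hsharp, hTpi]
  simp only [smul_smul, ← hsign, neg_mul]
end
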